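/- There exist 5 × 5 row-stochastic matrices A and B, each primitive (in fact A⁴ > 0 and B⁴ > 0 entrywise), such that the product B·A is not primitive; equivalently, the powers (BA)^t do not converge as t → ∞. Concretely, take A and B to be the transition matrices of the weighted graphs with adjacency matrices W₁ and W₂ given by: W₁ has rows (0,1,1,1,0), (1,0,0,1,0), (1,0,0,0,0), (1,1,0,0,1), (0,0,0,1,0); W₂ has rows (0,0,0,0,1), (0,0,1,0,1), (0,1,0,1,1), (0,0,1,0,0), (1,1,1,0,0); then the even and odd powers of BA converge to two distinct limits. -/

import Mathlib

open Matrix Finset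

noncomputable def matA : Matrix (Fin 5) (Fin 5) ℝ :=
  !![0, 1/3, 1/3, 1/3, 0;
     1/2, 0, 0, 1/2, 0;
     1, 0, 0, 0, 0;
     1/3, 1/3, 0, 0, 1/3;
     0, 0, 0, 1, 0]

noncomputable def matB : Matrix (Fin 5) (Fin 5) ℝ :=
  !![0, 0, 0, 0, 1;
     0, 0, 1/2, 0, 1/2;
     0, 1/3, 0, 1/3, 1/3;
     0, 0, 1, 0, 0;
     1/3, 1/3, 1/3, 0, 0]

noncomputable def matA2 : Matrix (Fin 5) (Fin 5) ℝ :=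
  !![11/18, 1/9, 0, 1/6, 1/9;
     1/6, 1/3, 1/6, 1/6, 1/6;
     0, 1/3, 1/3, 1/3, 0;
     1/6, 1/9, 1/9, 11/18, 0;
     1/3, 1/3, 0, 0, 1/3]

noncomputable def matB2 : Matrix (Fin 5) (Fin 5) ℝ :=
  !![1/3, 1/3, 1/3, 0, 0;
     1/6, 1/3, 1/6, 1/6, 1/6;
     1/9, 1/9, 11/18, 0, 1/6;
     0, 1/3, 0, 1/3, 1/3;
     0, 1/9, 1/6, 1/9, 11/18]

noncomputable def matA4 : Matrix (Fin 5) (Fin 5) ℝ :=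
  !![37/81, 13/81, 1/27, 2/9, 10/81;
     13/54, 7/27, 7/54, 13/54, 7/54;
     1/9, 7/27, 11/54, 10/27, 1/18;
     2/9, 13/81, 10/81, 37/81, 1/27;
     10/27, 7/27, 1/18, 1/9, 11/54]

noncomputable def matB4 : Matrix (Fin 5) (Fin 5) ℝ :=
  !![11/54, 7/27, 10/27, 1/18, 1/9;
     7/54, 7/27, 13/54, 7/54, 13/54;
     10/81, 13/81, 37/81, 1/27, 2/9;
     1/18, 7/27, 1/9, 11/54, 10/27;
     1/27, 13/81, 2/9, 10/81, 37/81]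

lemma matA_sq : matA * matA = matA2 := by
  ext i j
  fin_cases i <;> fin_cases j <;>
    simp [matA, matA2, Matrix.mul_apply, Fin.sum_univ_five, Matrix.vecHead, Matrix.vecTail] <;> norm_num

lemma matB_sq : matB * matB = matB2 := by
  ext i j
  fin_cases i <;> fin_cases j <;>
    simp [matB, matB2, Matrix.mul_apply, Fin.sum_univ_five, Matrix.vecHead, Matrix.vecTail] <;> norm_num

lemma matA2_sq : matA2 * matA2 = matA4 := by
  ext i j
  fin_cases i <;> fin_cases j <;>
    simp [matA2, matA4, Matrix.mul_apply, Fin.sum_univ_five, Matrix.vecHead, Matrix.vecTail] <;> norm_num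

lemma matB2_sq : matB2 * matB2 = matB4 := by
  ext i j
  fin_cases i <;> fin_cases j <;>
    simp [matB2, matB4, Matrix.mul_apply, Fin.sum_univ_five, Matrix.vecHead, Matrix.vecTail] <;> norm_num

lemma row0 : ∀ k, (matB * matA) 0 k = ![(0:ℝ),0,0,1,0] k := by
  intro k
  fin_cases k <;>
    simp [matA, matB, Matrix.mul_apply, Fin.sum_univ_five, Matrix.vecHead, Matrix.vecTail] <;> norm_num

lemma row3 : ∀ k, (matB * matA) 3 k = ![(1:ℝ),0,0,0,0] k := by
  intro k
  fin_cases k <;>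
    simp [matA, matB, Matrix.mul_apply, Fin.sum_univ_five, Matrix.vecHead, Matrix.vecTail] <;> norm_num

lemma mulrow0 (N : Matrix (Fin 5) (Fin 5) ℝ) (j : Fin 5) :
    ((matB * matA) * N) 0 j = N 3 j := by
  rw [Matrix.mul_apply, Fin.sum_univ_five]
  simp only [row0, Matrix.cons_val]
  norm_num

lemma mulrow3 (N : Matrix (Fin 5) (Fin 5) ℝ) (j : Fin 5) :
    ((matB * matA) * N) 3 j = N 0 j := by
  rw [Matrix.mul_apply, Fin.sum_univ_five]
  simp only [row3, Matrix.cons_val]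
  norm_num

lemma odd_zero : ∀ m : ℕ, ((matB * matA) ^ (2*m+1)) 0 0 = 0 ∧
    ((matB * matA) ^ (2*m+1)) 3 3 = 0 := by
  intro m
  induction m with
  | zero =>
    constructor
    · simpa using row0 0
    · simpa using row3 3
  | succ m ih =>
    have h2 : 2*(m+1)+1 = (2*m+1) + 1 + 1 := by ring
    rw [h2, pow_succ', pow_succ']
    exact ⟨by rw [mulrow0, mulrow3]; exact ih.1,
           by rw [mulrow3, mulrow0]; exact ih.2⟩

/-- There exist primitive 5×5 row-stochastic matrices `A, B` (indeed with
`A^4 > 0` and `B^4 > 0` entrywise) whose product `B·A` is not primitive. -/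
theorem stmt15 :
    ∃ A B : Matrix (Fin 5) (Fin 5) ℝ,
      (∀ i j, 0 ≤ A i j) ∧ (∀ i, ∑ j, A i j = 1) ∧
      (∀ i j, 0 ≤ B i j) ∧ (∀ i, ∑ j, B i j = 1) ∧
      (∀ i j, 0 < (A ^ 4) i j) ∧ (∀ i j, 0 < (B ^ 4) i j) ∧
      ¬ (∃ n : ℕ, 1 ≤ n ∧ ∀ i j, 0 < ((B * A) ^ n) i j) := by
  have hp4 : ∀ C : Matrix (Fin 5) (Fin 5) ℝ, C ^ 4 = (C * C) * (C * C) := by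
    intro C
    rw [show (4:ℕ) = 2*2 from rfl, pow_mul, sq, sq]
  refine ⟨matA, matB, ?_, ?_, ?_, ?_, ?_, ?_, ?_⟩
  · intro i j; fin_cases i <;> fin_cases j <;> norm_num [matA]
  · intro i; fin_cases i <;> norm_num [matA, Fin.sum_univ_five] <;> simp only [Matrix.cons_val] <;> norm_num
  · intro i j; fin_cases i <;> fin_cases j <;> norm_num [matB]
  · intro i; fin_cases i <;> norm_num [matB, Fin.sum_univ_five] <;> simp only [Matrix.cons_val] <;> norm_num
  · intro i j
    rw [hp4, matA_sq, matA2_sq]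
    fin_cases i <;> fin_cases j <;> norm_num [matA4]
  · intro i j
    rw [hp4, matB_sq, matB2_sq]
    fin_cases i <;> fin_cases j <;> norm_num [matB4]
  · rintro ⟨n, hn, hpos⟩
    rcases Nat.even_or_odd n with ⟨m, hm⟩ | ⟨m, hm⟩
    · obtain ⟨k, rfl⟩ : ∃ k, n = 2*k+1+1 := ⟨m - 1, by omega⟩
      have h := hpos 0 3
      rw [pow_succ', mulrow0, (odd_zero k).2] at h
      exact lt_irrefl 0 h
    · subst hm
      have h := hpos 0 0
      rw [(odd_zero m).1] at h
      exact lt_irrefl 0 h
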